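/- arXiv:2405.12911 — 4 statements merged into one kernel-verified Lean document; each statement's English description precedes it below -/
import Mathlib

section
/- Let Σ be a simply-connected Riemann surface and ψ = (x,y,z) : Σ → ℝ³ a smooth map satisfying, in a conformal parameter ξ, the system 2x_{ξξ̄} + φ̇(z_ξ x_{ξ̄} + z_{ξ̄} x_ξ) = 0, 2y_{ξξ̄} + φ̇(z_ξ y_{ξ̄} + z_{ξ̄} y_ξ) = 0, 2z_{ξξ̄} − φ̇(|x_ξ|² + |y_ξ|² − |z_ξ|²) = 0. Then the system x*_ξ = −i e^φ y_ξ, y*_ξ = i e^φ x_ξ, z*_ξ = e^φ z_ξ is integrable, i.e. the mixed partial derivatives agree: (x*_ξ)_{ξ̄} = (x*_{ξ̄})_ξ, (y*_ξ)_{ξ̄} = (y*_{ξ̄})_ξ, (z*_ξ)_{ξ̄} = (z*_{ξ̄})_ξ. -/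
/-- Wirtinger derivative `∂_ξ f = (f_u - i f_v)/2`. -/
noncomputable def wd (f : ℂ → ℂ) (ξ : ℂ) : ℂ :=
  (fderiv ℝ f ξ 1 - Complex.I * fderiv ℝ f ξ Complex.I) / 2

/-- Conjugate Wirtinger derivative `∂_ξ̄ f = (f_u + i f_v)/2`. -/
noncomputable def wdb (f : ℂ → ℂ) (ξ : ℂ) : ℂ :=
  (fderiv ℝ f ξ 1 + Complex.I * fderiv ℝ f ξ Complex.I) / 2

/-- Complexification of a real-valued function on `ℂ`. -/
def cf (x : ℂ → ℝ) : ℂ → ℂ := fun ζ => (x ζ : ℂ)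

section aux

lemma cf_contDiff {x : ℂ → ℝ} (hx : ContDiff ℝ (⊤ : ℕ∞) x) : ContDiff ℝ (⊤ : ℕ∞) (cf x) :=
  Complex.ofRealCLM.contDiff.comp hx

lemma dapply_contDiff {f : ℂ → ℂ} (hf : ContDiff ℝ (⊤ : ℕ∞) f) (v : ℂ) :
    ContDiff ℝ (⊤ : ℕ∞) (fun ζ => fderiv ℝ f ζ v) :=
  (hf.fderiv_right (by simp)).clm_apply contDiff_const

lemma wd_contDiff {f : ℂ → ℂ} (hf : ContDiff ℝ (⊤ : ℕ∞) f) : ContDiff ℝ (⊤ : ℕ∞) (wd f) := by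
  have : wd f = fun ξ => (fderiv ℝ f ξ 1 - Complex.I * fderiv ℝ f ξ Complex.I) / 2 := rfl
  rw [this]
  exact ((dapply_contDiff hf 1).sub (contDiff_const.mul (dapply_contDiff hf Complex.I))).div_const _

lemma wdb_contDiff {f : ℂ → ℂ} (hf : ContDiff ℝ (⊤ : ℕ∞) f) : ContDiff ℝ (⊤ : ℕ∞) (wdb f) := by
  have : wdb f = fun ξ => (fderiv ℝ f ξ 1 + Complex.I * fderiv ℝ f ξ Complex.I) / 2 := rfl
  rw [this]
  exact ((dapply_contDiff hf 1).add (contDiff_const.mul (dapply_contDiff hf Complex.I))).div_const _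

lemma wd_mul {f g : ℂ → ℂ} {ξ : ℂ} (hf : DifferentiableAt ℝ f ξ)
    (hg : DifferentiableAt ℝ g ξ) :
    wd (fun ζ => f ζ * g ζ) ξ = wd f ξ * g ξ + f ξ * wd g ξ := by
  simp only [wd, fderiv_fun_mul hf hg, ContinuousLinearMap.add_apply,
    ContinuousLinearMap.smul_apply, smul_eq_mul]
  ring

lemma wdb_mul {f g : ℂ → ℂ} {ξ : ℂ} (hf : DifferentiableAt ℝ f ξ)
    (hg : DifferentiableAt ℝ g ξ) :
    wdb (fun ζ => f ζ * g ζ) ξ = wdb f ξ * g ξ + f ξ * wdb g ξ := by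
  simp only [wdb, fderiv_fun_mul hf hg, ContinuousLinearMap.add_apply,
    ContinuousLinearMap.smul_apply, smul_eq_mul]
  ring

lemma wd_const_mul {g : ℂ → ℂ} {ξ : ℂ} (c : ℂ) (hg : DifferentiableAt ℝ g ξ) :
    wd (fun ζ => c * g ζ) ξ = c * wd g ξ := by
  simp only [wd, fderiv_const_mul hg, ContinuousLinearMap.smul_apply, smul_eq_mul]
  ring

lemma wdb_const_mul {g : ℂ → ℂ} {ξ : ℂ} (c : ℂ) (hg : DifferentiableAt ℝ g ξ) :
    wdb (fun ζ => c * g ζ) ξ = c * wdb g ξ := by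
  simp only [wdb, fderiv_const_mul hg, ContinuousLinearMap.smul_apply, smul_eq_mul]
  ring

lemma fderiv_cf_apply {x : ℂ → ℝ} {ξ : ℂ} (hx : DifferentiableAt ℝ x ξ) (v : ℂ) :
    fderiv ℝ (cf x) ξ v = (fderiv ℝ x ξ v : ℂ) := by
  have h : cf x = Complex.ofRealCLM ∘ x := rfl
  rw [h, fderiv_comp ξ Complex.ofRealCLM.differentiableAt hx,
    ContinuousLinearMap.fderiv]
  rfl

lemma fderiv_cf_comp_apply {h : ℝ → ℝ} {z : ℂ → ℝ} {ξ : ℂ}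
    (hh : DifferentiableAt ℝ h (z ξ)) (hz : DifferentiableAt ℝ z ξ) (v : ℂ) :
    fderiv ℝ (cf (fun ζ => h (z ζ))) ξ v = (Complex.ofReal (deriv h (z ξ))) * fderiv ℝ (cf z) ξ v := by
  rw [show (cf fun ζ => h (z ζ)) = cf (h ∘ z) from rfl,
    fderiv_cf_apply (x := h ∘ z) (hh.comp ξ hz) v, fderiv_cf_apply hz v, fderiv_comp ξ hh hz]
  simp only [ContinuousLinearMap.coe_comp', Function.comp_apply]
  have : fderiv ℝ h (z ξ) (fderiv ℝ z ξ v) = (fderiv ℝ z ξ v) • (fderiv ℝ h (z ξ) 1) := by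
    rw [← ContinuousLinearMap.map_smul, smul_eq_mul, mul_one]
  rw [this, fderiv_apply_one_eq_deriv, smul_eq_mul]
  push_cast
  ring

lemma wd_cf_comp {h : ℝ → ℝ} {z : ℂ → ℝ} {ξ : ℂ}
    (hh : DifferentiableAt ℝ h (z ξ)) (hz : DifferentiableAt ℝ z ξ) :
    wd (cf (fun ζ => h (z ζ))) ξ = (Complex.ofReal (deriv h (z ξ))) * wd (cf z) ξ := by
  simp only [wd, fderiv_cf_comp_apply hh hz]
  ring

lemma wdb_cf_comp {h : ℝ → ℝ} {z : ℂ → ℝ} {ξ : ℂ}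
    (hh : DifferentiableAt ℝ h (z ξ)) (hz : DifferentiableAt ℝ z ξ) :
    wdb (cf (fun ζ => h (z ζ))) ξ = (Complex.ofReal (deriv h (z ξ))) * wdb (cf z) ξ := by
  simp only [wdb, fderiv_cf_comp_apply hh hz]
  ring

lemma fderiv_dapply {f : ℂ → ℂ} (hf : ContDiff ℝ (⊤ : ℕ∞) f) (ξ v w : ℂ) :
    fderiv ℝ (fun ζ => fderiv ℝ f ζ v) ξ w = fderiv ℝ (fderiv ℝ f) ξ w v := by
  have hd : DifferentiableAt ℝ (fderiv ℝ f) ξ :=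
    ((hf.fderiv_right (m := 1) (WithTop.coe_le_coe.mpr le_top)).differentiable one_ne_zero) ξ
  rw [fderiv_clm_apply hd (differentiableAt_const v)]
  simp

lemma fderiv_wd_apply {f : ℂ → ℂ} (hf : ContDiff ℝ (⊤ : ℕ∞) f) (ξ w : ℂ) :
    fderiv ℝ (wd f) ξ w =
      (fderiv ℝ (fderiv ℝ f) ξ w 1 - Complex.I * fderiv ℝ (fderiv ℝ f) ξ w Complex.I) / 2 := by
  have h1 : DifferentiableAt ℝ (fun ζ => fderiv ℝ f ζ 1) ξ :=
    ((dapply_contDiff hf 1).differentiable (by simp)) ξ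
  have hI : DifferentiableAt ℝ (fun ζ => fderiv ℝ f ζ Complex.I) ξ :=
    ((dapply_contDiff hf Complex.I).differentiable (by simp)) ξ
  have heq : wd f = fun ζ => (2:ℂ)⁻¹ * (fderiv ℝ f ζ 1 - Complex.I * fderiv ℝ f ζ Complex.I) := by
    funext ζ; rw [wd, div_eq_inv_mul]
  have H := ((h1.hasFDerivAt.sub (hI.hasFDerivAt.const_mul Complex.I)).const_mul ((2:ℂ)⁻¹)).fderiv
  rw [heq]
  erw [H]
  simp only [ContinuousLinearMap.coe_smul', Pi.smul_apply, ContinuousLinearMap.coe_sub',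
    Pi.sub_apply, ContinuousLinearMap.smul_apply, smul_eq_mul, fderiv_dapply hf]
  ring

lemma fderiv_wdb_apply {f : ℂ → ℂ} (hf : ContDiff ℝ (⊤ : ℕ∞) f) (ξ w : ℂ) :
    fderiv ℝ (wdb f) ξ w =
      (fderiv ℝ (fderiv ℝ f) ξ w 1 + Complex.I * fderiv ℝ (fderiv ℝ f) ξ w Complex.I) / 2 := by
  have h1 : DifferentiableAt ℝ (fun ζ => fderiv ℝ f ζ 1) ξ :=
    ((dapply_contDiff hf 1).differentiable (by simp)) ξ
  have hI : DifferentiableAt ℝ (fun ζ => fderiv ℝ f ζ Complex.I) ξ :=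
    ((dapply_contDiff hf Complex.I).differentiable (by simp)) ξ
  have heq : wdb f = fun ζ => (2:ℂ)⁻¹ * (fderiv ℝ f ζ 1 + Complex.I * fderiv ℝ f ζ Complex.I) := by
    funext ζ; rw [wdb, div_eq_inv_mul]
  have H := ((h1.hasFDerivAt.add (hI.hasFDerivAt.const_mul Complex.I)).const_mul ((2:ℂ)⁻¹)).fderiv
  rw [heq]
  erw [H]
  simp only [ContinuousLinearMap.coe_smul', Pi.smul_apply, ContinuousLinearMap.coe_add',
    Pi.add_apply, ContinuousLinearMap.smul_apply, smul_eq_mul, fderiv_dapply hf]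
  ring

lemma wdb_wd_comm {f : ℂ → ℂ} (hf : ContDiff ℝ (⊤ : ℕ∞) f) (ξ : ℂ) :
    wdb (wd f) ξ = wd (wdb f) ξ := by
  have hs : IsSymmSndFDerivAt ℝ f ξ := hf.contDiffAt.isSymmSndFDerivAt (by simp [minSmoothness_of_isRCLikeNormedField]; exact WithTop.coe_le_coe.mpr le_top)
  simp only [wd, wdb, fderiv_wd_apply hf, fderiv_wdb_apply hf]
  rw [hs Complex.I 1]
  ring

end aux

lemma wdb_cf_exp {z : ℂ → ℝ} {φ : ℝ → ℝ} (hz : ContDiff ℝ (⊤ : ℕ∞) z) (hφ : ContDiff ℝ (⊤ : ℕ∞) φ)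
    (ξ : ℂ) :
    wdb (fun ζ => Complex.ofReal (Real.exp (φ (z ζ)))) ξ =
      Complex.ofReal (Real.exp (φ (z ξ))) * Complex.ofReal (deriv φ (z ξ)) * wdb (cf z) ξ := by
  have h1 : DifferentiableAt ℝ (fun t => Real.exp (φ t)) (z ξ) :=
    (Real.differentiable_exp _).comp _ ((hφ.differentiable (by simp)) _)
  have h2 : deriv (fun t => Real.exp (φ t)) (z ξ) = Real.exp (φ (z ξ)) * deriv φ (z ξ) := by
    rw [show (fun t => Real.exp (φ t)) = Real.exp ∘ φ from rfl,
      deriv_comp _ (Real.differentiable_exp _) ((hφ.differentiable (by simp)) _), Real.deriv_exp]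
  have := wdb_cf_comp (h := fun t => Real.exp (φ t)) (z := z) (ξ := ξ) h1
    ((hz.differentiable (by simp)) ξ)
  rw [show (fun ζ => Complex.ofReal (Real.exp (φ (z ζ))))
      = cf (fun ζ => Real.exp (φ (z ζ))) from rfl, this, h2]
  push_cast
  ring

lemma wd_cf_exp {z : ℂ → ℝ} {φ : ℝ → ℝ} (hz : ContDiff ℝ (⊤ : ℕ∞) z) (hφ : ContDiff ℝ (⊤ : ℕ∞) φ)
    (ξ : ℂ) :
    wd (fun ζ => Complex.ofReal (Real.exp (φ (z ζ)))) ξ =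
      Complex.ofReal (Real.exp (φ (z ξ))) * Complex.ofReal (deriv φ (z ξ)) * wd (cf z) ξ := by
  have h1 : DifferentiableAt ℝ (fun t => Real.exp (φ t)) (z ξ) :=
    (Real.differentiable_exp _).comp _ ((hφ.differentiable (by simp)) _)
  have h2 : deriv (fun t => Real.exp (φ t)) (z ξ) = Real.exp (φ (z ξ)) * deriv φ (z ξ) := by
    rw [show (fun t => Real.exp (φ t)) = Real.exp ∘ φ from rfl,
      deriv_comp _ (Real.differentiable_exp _) ((hφ.differentiable (by simp)) _), Real.deriv_exp]
  have := wd_cf_comp (h := fun t => Real.exp (φ t)) (z := z) (ξ := ξ) h1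
    ((hz.differentiable (by simp)) ξ)
  rw [show (fun ζ => Complex.ofReal (Real.exp (φ (z ζ))))
      = cf (fun ζ => Real.exp (φ (z ζ))) from rfl, this, h2]
  push_cast
  ring

lemma cf_exp_contDiff {z : ℂ → ℝ} {φ : ℝ → ℝ} (hz : ContDiff ℝ (⊤ : ℕ∞) z) (hφ : ContDiff ℝ (⊤ : ℕ∞) φ) :
    ContDiff ℝ (⊤ : ℕ∞) (fun ζ => Complex.ofReal (Real.exp (φ (z ζ)))) :=
  cf_contDiff ((Real.contDiff_exp.comp hφ).comp hz)

lemma expand_wdb {z f : ℂ → ℝ} {φ : ℝ → ℝ} (hz : ContDiff ℝ (⊤ : ℕ∞) z) (hf : ContDiff ℝ (⊤ : ℕ∞) f)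
    (hφ : ContDiff ℝ (⊤ : ℕ∞) φ) (c ξ : ℂ) :
    wdb (fun ζ => c * Complex.ofReal (Real.exp (φ (z ζ))) * wd (cf f) ζ) ξ =
      c * Complex.ofReal (Real.exp (φ (z ξ))) *
        (Complex.ofReal (deriv φ (z ξ)) * wdb (cf z) ξ * wd (cf f) ξ + wdb (wd (cf f)) ξ) := by
  have hE := cf_exp_contDiff hz hφ
  have hcE : DifferentiableAt ℝ (fun ζ => c * Complex.ofReal (Real.exp (φ (z ζ)))) ξ :=
    ((contDiff_const.mul hE).differentiable (by simp)) ξ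
  have hW : DifferentiableAt ℝ (wd (cf f)) ξ :=
    ((wd_contDiff (cf_contDiff hf)).differentiable (by simp)) ξ
  rw [show (fun ζ => c * Complex.ofReal (Real.exp (φ (z ζ))) * wd (cf f) ζ)
      = (fun ζ => (fun w => c * Complex.ofReal (Real.exp (φ (z w)))) ζ * wd (cf f) ζ) from rfl,
    wdb_mul hcE hW, wdb_const_mul c ((hE.differentiable (by simp)) ξ),
    wdb_cf_exp hz hφ ξ]
  ring

lemma expand_wd {z f : ℂ → ℝ} {φ : ℝ → ℝ} (hz : ContDiff ℝ (⊤ : ℕ∞) z) (hf : ContDiff ℝ (⊤ : ℕ∞) f)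
    (hφ : ContDiff ℝ (⊤ : ℕ∞) φ) (c ξ : ℂ) :
    wd (fun ζ => c * Complex.ofReal (Real.exp (φ (z ζ))) * wdb (cf f) ζ) ξ =
      c * Complex.ofReal (Real.exp (φ (z ξ))) *
        (Complex.ofReal (deriv φ (z ξ)) * wd (cf z) ξ * wdb (cf f) ξ + wdb (wd (cf f)) ξ) := by
  have hE := cf_exp_contDiff hz hφ
  have hcE : DifferentiableAt ℝ (fun ζ => c * Complex.ofReal (Real.exp (φ (z ζ)))) ξ :=
    ((contDiff_const.mul hE).differentiable (by simp)) ξ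
  have hW : DifferentiableAt ℝ (wdb (cf f)) ξ :=
    ((wdb_contDiff (cf_contDiff hf)).differentiable (by simp)) ξ
  rw [show (fun ζ => c * Complex.ofReal (Real.exp (φ (z ζ))) * wdb (cf f) ζ)
      = (fun ζ => (fun w => c * Complex.ofReal (Real.exp (φ (z w)))) ζ * wdb (cf f) ζ) from rfl,
    wd_mul hcE hW, wd_const_mul c ((hE.differentiable (by simp)) ξ),
    wd_cf_exp hz hφ ξ, wdb_wd_comm (cf_contDiff hf) ξ]
  ring


/-- Proposition 2.1: integrability of the Calabi system. -/
theorem stmt_0 (U : Set ℂ) (hU : IsOpen U)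
    (x y z : ℂ → ℝ) (φ : ℝ → ℝ)
    (hx : ContDiff ℝ (⊤ : ℕ∞) x) (hy : ContDiff ℝ (⊤ : ℕ∞) y) (hz : ContDiff ℝ (⊤ : ℕ∞) z)
    (hφ : ContDiff ℝ (⊤ : ℕ∞) φ)
    (hsys1 : ∀ ξ ∈ U, 2 * wdb (wd (cf x)) ξ +
      (Complex.ofReal (deriv φ (z ξ))) * (wd (cf z) ξ * wdb (cf x) ξ + wdb (cf z) ξ * wd (cf x) ξ) = 0)
    (hsys2 : ∀ ξ ∈ U, 2 * wdb (wd (cf y)) ξ +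
      (Complex.ofReal (deriv φ (z ξ))) * (wd (cf z) ξ * wdb (cf y) ξ + wdb (cf z) ξ * wd (cf y) ξ) = 0)
    (hsys3 : ∀ ξ ∈ U, 2 * wdb (wd (cf z)) ξ -
      (Complex.ofReal (deriv φ (z ξ))) * ((Complex.normSq (wd (cf x) ξ) : ℂ) +
        (Complex.normSq (wd (cf y) ξ) : ℂ) - (Complex.normSq (wd (cf z) ξ) : ℂ)) = 0) :
    ∀ ξ ∈ U,
      (wdb (fun ζ => -Complex.I * (Complex.ofReal (Real.exp (φ (z ζ)))) * wd (cf y) ζ) ξ =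
        wd (fun ζ => Complex.I * (Complex.ofReal (Real.exp (φ (z ζ)))) * wdb (cf y) ζ) ξ) ∧
      (wdb (fun ζ => Complex.I * (Complex.ofReal (Real.exp (φ (z ζ)))) * wd (cf x) ζ) ξ =
        wd (fun ζ => -Complex.I * (Complex.ofReal (Real.exp (φ (z ζ)))) * wdb (cf x) ζ) ξ) ∧
      (wdb (fun ζ => (Complex.ofReal (Real.exp (φ (z ζ)))) * wd (cf z) ζ) ξ =
        wd (fun ζ => (Complex.ofReal (Real.exp (φ (z ζ)))) * wdb (cf z) ζ) ξ) := by
  intro ξ hξ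
  refine ⟨?_, ?_, ?_⟩
  · rw [expand_wdb hz hy hφ (-Complex.I) ξ, expand_wd hz hy hφ Complex.I ξ]
    linear_combination (-Complex.I * Complex.ofReal (Real.exp (φ (z ξ)))) * hsys2 ξ hξ
  · rw [expand_wdb hz hx hφ Complex.I ξ, expand_wd hz hx hφ (-Complex.I) ξ]
    linear_combination (Complex.I * Complex.ofReal (Real.exp (φ (z ξ)))) * hsys1 ξ hξ
  · rw [show (fun ζ => Complex.ofReal (Real.exp (φ (z ζ))) * wd (cf z) ζ)
        = (fun ζ => (1 : ℂ) * Complex.ofReal (Real.exp (φ (z ζ))) * wd (cf z) ζ) from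
        funext fun ζ => by ring,
      show (fun ζ => Complex.ofReal (Real.exp (φ (z ζ))) * wdb (cf z) ζ)
        = (fun ζ => (1 : ℂ) * Complex.ofReal (Real.exp (φ (z ζ))) * wdb (cf z) ζ) from
        funext fun ζ => by ring,
      expand_wdb hz hz hφ 1 ξ, expand_wd hz hz hφ 1 ξ]
    ring
end

section
/- With ψ and ψ* as in the Calabi correspondence (x*_ξ = −i e^φ y_ξ, y*_ξ = i e^φ x_ξ, z*_ξ = e^φ z_ξ, with ψ conformal: x_ξ² + y_ξ² + z_ξ² = 0), the Lorentzian conformal factor E* = 2(|x*_ξ|² + |y*_ξ|² − |z*_ξ|²) satisfies E* = e^{2φ} η² E, where E = 2(|x_ξ|² + |y_ξ|² + |z_ξ|²) and η = η₃/E with η₃ = −2i(x_ξ y_{ξ̄} − x_{ξ̄} y_ξ) the third component of the unnormalized normal of ψ. -/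
lemma im_fderiv_cf (x : ℂ → ℝ) (ξ v : ℂ) : (fderiv ℝ (cf x) ξ v).im = 0 := by
  by_cases h : DifferentiableAt ℝ (cf x) ξ
  · have h1 : fderiv ℝ (fun ζ : ℂ => Complex.imCLM (cf x ζ)) ξ
        = Complex.imCLM.comp (fderiv ℝ (cf x) ξ) :=
      (Complex.imCLM.hasFDerivAt.comp ξ h.hasFDerivAt).fderiv
    have h0 : (fun ζ : ℂ => Complex.imCLM (cf x ζ)) = fun _ => (0:ℝ) := by
      funext ζ; simp [cf]
    rw [h0] at h1
    rw [fderiv_fun_const] at h1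
    have := congrArg (fun L : ℂ →L[ℝ] ℝ => L v) h1.symm
    simpa using this
  · rw [fderiv_zero_of_not_differentiableAt h]; simp

lemma wdb_eq_conj (x : ℂ → ℝ) (ξ : ℂ) :
    wdb (cf x) ξ = (starRingEnd ℂ) (wd (cf x) ξ) := by
  have ha : (starRingEnd ℂ) (fderiv ℝ (cf x) ξ 1) = fderiv ℝ (cf x) ξ 1 :=
    Complex.conj_eq_iff_im.2 (im_fderiv_cf x ξ 1)
  have hb : (starRingEnd ℂ) (fderiv ℝ (cf x) ξ Complex.I) = fderiv ℝ (cf x) ξ Complex.I :=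
    Complex.conj_eq_iff_im.2 (im_fderiv_cf x ξ Complex.I)
  unfold wd wdb
  rw [map_div₀, map_sub, map_mul, ha, hb, Complex.conj_I]
  have : (starRingEnd ℂ) 2 = 2 := map_ofNat _ 2
  rw [this]
  ring
/-- The Lorentzian conformal factor of the Calabi partner: `E* = e^{2φ} η² E`,
together with the identity `η₃² = 4(|x_ξ|²+|y_ξ|²-|z_ξ|²)(|x_ξ|²+|y_ξ|²+|z_ξ|²)`. -/
theorem stmt_2 (U : Set ℂ) (hU : IsOpen U)
    (x y z xs ys zs : ℂ → ℝ) (φ : ℝ → ℝ)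
    (hconf : ∀ ξ ∈ U, (wd (cf x) ξ) ^ 2 + (wd (cf y) ξ) ^ 2 + (wd (cf z) ξ) ^ 2 = 0)
    (hxs : ∀ ξ ∈ U, wd (cf xs) ξ =
      -Complex.I * (Complex.ofReal (Real.exp (φ (z ξ)))) * wd (cf y) ξ)
    (hys : ∀ ξ ∈ U, wd (cf ys) ξ =
      Complex.I * (Complex.ofReal (Real.exp (φ (z ξ)))) * wd (cf x) ξ)
    (hzs : ∀ ξ ∈ U, wd (cf zs) ξ =
      (Complex.ofReal (Real.exp (φ (z ξ)))) * wd (cf z) ξ) :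
    ∀ ξ ∈ U,
      let E : ℝ := 2 * (Complex.normSq (wd (cf x) ξ) + Complex.normSq (wd (cf y) ξ) +
        Complex.normSq (wd (cf z) ξ))
      let Estar : ℝ := 2 * (Complex.normSq (wd (cf xs) ξ) + Complex.normSq (wd (cf ys) ξ) -
        Complex.normSq (wd (cf zs) ξ))
      let η₃ : ℂ := -2 * Complex.I *
        (wd (cf x) ξ * wdb (cf y) ξ - wdb (cf x) ξ * wd (cf y) ξ)
      let η : ℂ := η₃ / (Complex.ofReal E)
      (η₃ ^ 2 = 4 * (Complex.ofReal (Complex.normSq (wd (cf x) ξ) +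
          Complex.normSq (wd (cf y) ξ) - Complex.normSq (wd (cf z) ξ))) *
        (Complex.ofReal (Complex.normSq (wd (cf x) ξ) + Complex.normSq (wd (cf y) ξ) +
          Complex.normSq (wd (cf z) ξ)))) ∧
      (Complex.ofReal Estar =
        Complex.ofReal (Real.exp (2 * φ (z ξ))) * η ^ 2 * Complex.ofReal E) := by
  intro ξ hξ
  set X := wd (cf x) ξ with hX
  set Y := wd (cf y) ξ with hY
  set Z := wd (cf z) ξ with hZ
  have h1 : X ^ 2 + Y ^ 2 + Z ^ 2 = 0 := hconf ξ hξ
  have h2 : (starRingEnd ℂ) X ^ 2 + (starRingEnd ℂ) Y ^ 2 + (starRingEnd ℂ) Z ^ 2 = 0 := by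
    have := congrArg (starRingEnd ℂ) h1
    simpa using this
  set cX := (starRingEnd ℂ) X
  set cY := (starRingEnd ℂ) Y
  set cZ := (starRingEnd ℂ) Z
  have hmX : (Complex.normSq X : ℂ) = X * cX := (Complex.mul_conj X).symm
  have hmY : (Complex.normSq Y : ℂ) = Y * cY := (Complex.mul_conj Y).symm
  have hmZ : (Complex.normSq Z : ℂ) = Z * cZ := (Complex.mul_conj Z).symm
  intro E Estar η₃ η
  have hη₃ : η₃ = -2 * Complex.I * (X * cY - cX * Y) := by
    simp only [η₃, wdb_eq_conj, hX, hY]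
    rfl
  have key : η₃ ^ 2 = 4 * ((X * cX + Y * cY) - Z * cZ) * ((X * cX + Y * cY) + Z * cZ) := by
    rw [hη₃]
    linear_combination (4 * cZ ^ 2) * h1 + (-4 * (X ^ 2 + Y ^ 2)) * h2 +
      (4 * X ^ 2 * cY ^ 2 + 4 * cX ^ 2 * Y ^ 2 - 8 * X * cX * Y * cY) * Complex.I_sq
  have claim1 : η₃ ^ 2 = 4 * (Complex.ofReal (Complex.normSq X +
      Complex.normSq Y - Complex.normSq Z)) *
      (Complex.ofReal (Complex.normSq X + Complex.normSq Y + Complex.normSq Z)) := by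
    rw [key]; push_cast [hmX, hmY, hmZ]; ring
  refine ⟨claim1, ?_⟩
  -- compute normSq of starred coordinates
  set r := Real.exp (φ (z ξ)) with hr
  have hr2 : Real.exp (2 * φ (z ξ)) = r ^ 2 := by
    rw [hr, ← Real.exp_nat_mul]; ring_nf
  have hnI : Complex.normSq (-Complex.I) = 1 := by simp
  have hI : Complex.normSq Complex.I = 1 := by simp
  have hnxs : Complex.normSq (wd (cf xs) ξ) = r ^ 2 * Complex.normSq Y := by
    rw [hxs ξ hξ, map_mul, map_mul, Complex.normSq_ofReal, hnI]; ring
  have hnys : Complex.normSq (wd (cf ys) ξ) = r ^ 2 * Complex.normSq X := by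
    rw [hys ξ hξ, map_mul, map_mul, Complex.normSq_ofReal, hI]; ring
  have hnzs : Complex.normSq (wd (cf zs) ξ) = r ^ 2 * Complex.normSq Z := by
    rw [hzs ξ hξ, map_mul, Complex.normSq_ofReal]; ring
  have hEstar : Estar = r ^ 2 * (2 * (Complex.normSq X + Complex.normSq Y - Complex.normSq Z)) := by
    simp only [Estar, hnxs, hnys, hnzs]; ring
  by_cases hE : E = 0
  · -- degenerate case: all derivatives vanish
    have hsum : Complex.normSq X + Complex.normSq Y + Complex.normSq Z = 0 := by
      simp only [E] at hE; linarith
    have hx0 : Complex.normSq X = 0 := by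
      nlinarith [Complex.normSq_nonneg X, Complex.normSq_nonneg Y, Complex.normSq_nonneg Z]
    have hy0 : Complex.normSq Y = 0 := by
      nlinarith [Complex.normSq_nonneg X, Complex.normSq_nonneg Y, Complex.normSq_nonneg Z]
    have hz0 : Complex.normSq Z = 0 := by
      nlinarith [Complex.normSq_nonneg X, Complex.normSq_nonneg Y, Complex.normSq_nonneg Z]
    rw [hEstar, hx0, hy0, hz0, hE]
    simp
  · have hEc : (E : ℂ) ≠ 0 := by exact_mod_cast hE
    have hstep : η ^ 2 * (E : ℂ) = η₃ ^ 2 / (E : ℂ) := by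
      simp only [η]; field_simp
    have hEval : (E : ℂ) = 2 * ((Complex.normSq X : ℂ) + Complex.normSq Y + Complex.normSq Z) := by
      simp only [E]; push_cast; ring
    have hs : (2 : ℂ) * ((Complex.normSq X : ℂ) + Complex.normSq Y + Complex.normSq Z) ≠ 0 := by
      rw [← hEval]; exact hEc
    have h3 : η ^ 2 * (E : ℂ) =
        2 * ((Complex.normSq X : ℂ) + Complex.normSq Y - Complex.normSq Z) := by
      rw [hstep, claim1, hEval]
      rw [div_eq_iff hs]
      push_cast
      ring
    rw [hEstar, hr2]
    push_cast
    rw [mul_assoc, h3]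
end

section
/- Let (ψ, ψ*) be a Calabi pair with ψ an immersion with unit normal N (from the formula N = −2i ψ_ξ ∧ ψ_{ξ̄}/E). Then the differentials satisfy dψ* = ⟨e₃, dψ⟩ (N + e₃) − ⟨e₃, N⟩ dψ. -/
noncomputable def du3 (f : ℂ → ℝ × ℝ × ℝ) (ξ : ℂ) : ℝ × ℝ × ℝ := fderiv ℝ f ξ 1
noncomputable def dv3 (f : ℂ → ℝ × ℝ × ℝ) (ξ : ℂ) : ℝ × ℝ × ℝ := fderiv ℝ f ξ Complex.I

def dot3 (a b : ℝ × ℝ × ℝ) : ℝ := a.1 * b.1 + a.2.1 * b.2.1 + a.2.2 * b.2.2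

def cross3 (a b : ℝ × ℝ × ℝ) : ℝ × ℝ × ℝ :=
  (a.2.1 * b.2.2 - a.2.2 * b.2.1, a.2.2 * b.1 - a.1 * b.2.2, a.1 * b.2.1 - a.2.1 * b.1)

def e3 : ℝ × ℝ × ℝ := (0, 0, 1)

/-- Remark 2.8: for a Calabi pair `(ψ, ψ*)`,
`e^{-φ} dψ* = ⟨e₃, dψ⟩ (N + e₃) - ⟨e₃, N⟩ dψ` as `ℝ³`-valued 1-forms. -/
theorem stmt_6 (U : Set ℂ) (hU : IsOpen U)
    (ψ ψs : ℂ → ℝ × ℝ × ℝ) (N : ℂ → ℝ × ℝ × ℝ) (φ : ℝ → ℝ)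
    (hψ : ContDiff ℝ 2 ψ) (hψs : ContDiff ℝ 1 ψs)
    (hconf1 : ∀ ξ ∈ U, dot3 (du3 ψ ξ) (du3 ψ ξ) = dot3 (dv3 ψ ξ) (dv3 ψ ξ))
    (hconf2 : ∀ ξ ∈ U, dot3 (du3 ψ ξ) (dv3 ψ ξ) = 0)
    (himm : ∀ ξ ∈ U, 0 < dot3 (du3 ψ ξ) (du3 ψ ξ))
    (hN : ∀ ξ ∈ U, N ξ = (dot3 (du3 ψ ξ) (du3 ψ ξ))⁻¹ • cross3 (du3 ψ ξ) (dv3 ψ ξ))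
    -- the Calabi correspondence, written in real partial derivatives:
    (hxu : ∀ ξ ∈ U, (du3 ψs ξ).1 = -Real.exp (φ (ψ ξ).2.2) * (dv3 ψ ξ).2.1)
    (hxv : ∀ ξ ∈ U, (dv3 ψs ξ).1 = Real.exp (φ (ψ ξ).2.2) * (du3 ψ ξ).2.1)
    (hyu : ∀ ξ ∈ U, (du3 ψs ξ).2.1 = Real.exp (φ (ψ ξ).2.2) * (dv3 ψ ξ).1)
    (hyv : ∀ ξ ∈ U, (dv3 ψs ξ).2.1 = -Real.exp (φ (ψ ξ).2.2) * (du3 ψ ξ).1)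
    (hzu : ∀ ξ ∈ U, (du3 ψs ξ).2.2 = Real.exp (φ (ψ ξ).2.2) * (du3 ψ ξ).2.2)
    (hzv : ∀ ξ ∈ U, (dv3 ψs ξ).2.2 = Real.exp (φ (ψ ξ).2.2) * (dv3 ψ ξ).2.2) :
    ∀ ξ ∈ U, ∀ w : ℂ,
      Real.exp (-(φ (ψ ξ).2.2)) • (fderiv ℝ ψs ξ w) =
        dot3 e3 (fderiv ℝ ψ ξ w) • (N ξ + e3) - dot3 e3 (N ξ) • fderiv ℝ ψ ξ w := by
  intro ξ hξ w
  have hdecomp : ∀ f : ℂ → ℝ × ℝ × ℝ, fderiv ℝ f ξ w = w.re • du3 f ξ + w.im • dv3 f ξ := by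
    intro f
    have hw : w = w.re • (1:ℂ) + w.im • Complex.I := by
      simp [Complex.real_smul, Complex.ext_iff]
    rw [du3, dv3, ← map_smul, ← map_smul, ← map_add, ← hw]
  rw [hdecomp ψs, hdecomp ψ, hN ξ hξ]
  have hE0 : dot3 (du3 ψ ξ) (du3 ψ ξ) ≠ 0 := ne_of_gt (himm ξ hξ)
  have h1 := hconf1 ξ hξ
  have h2 := hconf2 ξ hξ
  have hexp : Real.exp (-(φ (ψ ξ).2.2)) * Real.exp (φ (ψ ξ).2.2) = 1 := by
    rw [← Real.exp_add]; simp
  have e1 := hxu ξ hξ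
  have e2 := hxv ξ hξ
  have e3' := hyu ξ hξ
  have e4 := hyv ξ hξ
  have e5 := hzu ξ hξ
  have e6 := hzv ξ hξ
  clear hconf1 hconf2 himm hN hxu hxv hyu hyv hzu hzv hψ hψs hdecomp hU
  generalize hQ : Real.exp (-(φ (ψ ξ).2.2)) = Q at *
  generalize hP : Real.exp (φ (ψ ξ).2.2) = P at *
  generalize hA : du3 ψ ξ = du at *
  generalize hB : dv3 ψ ξ = dv at *
  generalize hC : du3 ψs ξ = dus at *
  generalize hD : dv3 ψs ξ = dvs at *
  obtain ⟨xu, yu, zu⟩ := du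
  obtain ⟨xv, yv, zv⟩ := dv
  obtain ⟨xsu, ysu, zsu⟩ := dus
  obtain ⟨xsv, ysv, zsv⟩ := dvs
  subst e1 e2 e3' e4 e5 e6
  set a := w.re
  set b := w.im
  simp only [dot3, cross3, e3, Prod.smul_mk, Prod.mk_add_mk, Prod.mk_sub_mk, smul_eq_mul,
    mul_zero, mul_one, zero_mul, one_mul, add_zero, zero_add, Prod.mk.injEq] at h1 h2 hE0 ⊢
  have hPne : P ≠ 0 := by rw [← hP]; exact (Real.exp_pos _).ne'
  have hQeq : Q = P⁻¹ := by field_simp; linear_combination hexp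
  subst hQeq
  have hE0' : xu ^ 2 + yu ^ 2 + zu ^ 2 ≠ 0 := by convert hE0 using 1; ring
  refine ⟨?_, ?_, ?_⟩ <;> field_simp
  · linear_combination b*yu*h1 + (-(a*yu)+b*yv)*h2
  · linear_combination -(b*xu)*h1 + (a*xu-b*xv)*h2
  · linear_combination
end

section
/- Let ψ be the solution of the Cauchy problem with initial data ψ(u,0) = p + ∫₀ᵘ(B sin t, B cos t, A)dt and ψ_v(u,0) = (−A sin u, −A cos u, B), with A² + B² > 0. Then along v = 0, the angle function η = ⟨ψ_u ∧ ψ_v, e₃⟩/‖ψ_u‖² satisfies η(u,0) = 0 and η_v(u,0) = 1. -/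
noncomputable def du (f : ℂ → ℝ) (ξ : ℂ) : ℝ := fderiv ℝ f ξ 1
noncomputable def dv (f : ℂ → ℝ) (ξ : ℂ) : ℝ := fderiv ℝ f ξ Complex.I
noncomputable def lap (f : ℂ → ℝ) (ξ : ℂ) : ℝ := du (du f) ξ + dv (dv f) ξ

/-- The angle function `η = ⟨ψ_u ∧ ψ_v, e₃⟩ / ‖ψ_u‖²`. -/
noncomputable def angle (x y z : ℂ → ℝ) (ξ : ℂ) : ℝ :=
  (du x ξ * dv y ξ - du y ξ * dv x ξ) /
    (du x ξ ^ 2 + du y ξ ^ 2 + du z ξ ^ 2)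

lemma du_cd {f : ℂ → ℝ} (hf : ContDiff ℝ 2 f) : ContDiff ℝ 1 (du f) :=
  (hf.fderiv_right (m := 1) (by norm_num)).clm_apply contDiff_const

lemma dv_cd {f : ℂ → ℝ} (hf : ContDiff ℝ 2 f) : ContDiff ℝ 1 (dv f) :=
  (hf.fderiv_right (m := 1) (by norm_num)).clm_apply contDiff_const

lemma hasDerivAt_real {g : ℂ → ℝ} {u : ℝ} (hg : DifferentiableAt ℝ g ↑u) :
    HasDerivAt (fun t : ℝ => g ↑t) (fderiv ℝ g ↑u 1) u := by
  have h1 : HasFDerivAt (fun t : ℝ => (t : ℂ)) Complex.ofRealCLM u :=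
    Complex.ofRealCLM.hasFDerivAt
  have h2 := (hg.hasFDerivAt.comp u h1).hasDerivAt
  simp at h2; exact h2

lemma du_eq_deriv {g : ℂ → ℝ} {h : ℝ → ℝ} {d : ℝ} {u : ℝ}
    (hg : DifferentiableAt ℝ g ↑u) (heq : ∀ t : ℝ, g ↑t = h t)
    (hh : HasDerivAt h d u) : du g ↑u = d := by
  have h1 := hasDerivAt_real hg
  rw [show (fun t : ℝ => g ↑t) = h from funext heq] at h1
  exact h1.unique hh

lemma dv_du_symm {f : ℂ → ℝ} (hf : ContDiff ℝ 2 f) (ξ : ℂ) :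
    dv (du f) ξ = du (dv f) ξ := by
  have hdf : DifferentiableAt ℝ (fderiv ℝ f) ξ :=
    ((hf.fderiv_right (m := 1) (by norm_num)).differentiable one_ne_zero).differentiableAt
  have hsym := (hf.contDiffAt (x := ξ)).isSymmSndFDerivAt (by simp)
  have key : ∀ w : ℂ, fderiv ℝ (fun ζ => fderiv ℝ f ζ w) ξ =
      (fderiv ℝ (fderiv ℝ f) ξ).flip w := by
    intro w
    rw [fderiv_clm_apply hdf (differentiableAt_const w)]
    simp
  have e1 : dv (du f) ξ = fderiv ℝ (fderiv ℝ f) ξ Complex.I 1 := by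
    show fderiv ℝ (fun ζ => fderiv ℝ f ζ 1) ξ Complex.I = _
    rw [key]; rfl
  have e2 : du (dv f) ξ = fderiv ℝ (fderiv ℝ f) ξ 1 Complex.I := by
    show fderiv ℝ (fun ζ => fderiv ℝ f ζ Complex.I) ξ 1 = _
    rw [key]; rfl
  rw [e1, e2, hsym]

/-- The boundary computation of Theorem 4.10: with the prescribed Cauchy data,
the angle function satisfies `η(u,0) = 0` and `η_v(u,0) = 1`. -/
theorem stmt_14 (x y z : ℂ → ℝ) (A B : ℝ → ℝ) (φ : ℝ → ℝ)
    (hx : ContDiff ℝ 2 x) (hy : ContDiff ℝ 2 y) (hz : ContDiff ℝ 2 z)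
    (hφ : ContDiff ℝ 1 φ)
    (hAB : ∀ u : ℝ, 0 < A u ^ 2 + B u ^ 2)
    (hux : ∀ u : ℝ, du x (u : ℂ) = B u * Real.sin u)
    (huy : ∀ u : ℝ, du y (u : ℂ) = B u * Real.cos u)
    (huz : ∀ u : ℝ, du z (u : ℂ) = A u)
    (hvx : ∀ u : ℝ, dv x (u : ℂ) = -A u * Real.sin u)
    (hvy : ∀ u : ℝ, dv y (u : ℂ) = -A u * Real.cos u)
    (hvz : ∀ u : ℝ, dv z (u : ℂ) = B u)
    (hpde1 : ∀ ξ : ℂ, lap x ξ = -deriv φ (z ξ) * (du x ξ * du z ξ + dv x ξ * dv z ξ))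
    (hpde2 : ∀ ξ : ℂ, lap y ξ = -deriv φ (z ξ) * (du y ξ * du z ξ + dv y ξ * dv z ξ))
    (hpde3 : ∀ ξ : ℂ, lap z ξ = -deriv φ (z ξ) *
      (-(du x ξ ^ 2 + dv x ξ ^ 2) - (du y ξ ^ 2 + dv y ξ ^ 2) + (du z ξ ^ 2 + dv z ξ ^ 2))) :
    ∀ u : ℝ, angle x y z (u : ℂ) = 0 ∧ dv (angle x y z) (u : ℂ) = 1 := by
  intro u
  -- differentiability of first partials
  have hdux := (du_cd hx).differentiable one_ne_zero
  have hduy := (du_cd hy).differentiable one_ne_zero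
  have hduz := (du_cd hz).differentiable one_ne_zero
  have hdvx := (dv_cd hx).differentiable one_ne_zero
  have hdvy := (dv_cd hy).differentiable one_ne_zero
  have hdvz := (dv_cd hz).differentiable one_ne_zero
  -- A and B are differentiable
  have hAfun : A = fun t : ℝ => du z ↑t := funext fun t => (huz t).symm
  have hBfun : B = fun t : ℝ => dv z ↑t := funext fun t => (hvz t).symm
  have hA : DifferentiableAt ℝ A u := by
    rw [hAfun]; exact (hasDerivAt_real (hduz ↑u)).differentiableAt
  have hB : DifferentiableAt ℝ B u := by
    rw [hBfun]; exact (hasDerivAt_real (hdvz ↑u)).differentiableAt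
  set a := deriv A u with ha
  set b := deriv B u with hb
  have hAd : HasDerivAt A a u := hA.hasDerivAt
  have hBd : HasDerivAt B b u := hB.hasDerivAt
  set s := Real.sin u with hs
  set c := Real.cos u with hc
  -- second partials along the real axis
  have hduux : du (du x) ↑u = b * s + B u * c :=
    du_eq_deriv ((hdux ↑u)) hux (hBd.mul (Real.hasDerivAt_sin u))
  have hduuy : du (du y) ↑u = b * c + B u * (-s) :=
    du_eq_deriv ((hduy ↑u)) huy (hBd.mul (Real.hasDerivAt_cos u))
  have hdvux : dv (du x) ↑u = -a * s + -A u * c := by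
    rw [dv_du_symm hx ↑u]
    exact du_eq_deriv ((hdvx ↑u)) hvx ((hAd.neg).mul (Real.hasDerivAt_sin u))
  have hdvuy : dv (du y) ↑u = -a * c + -A u * (-s) := by
    rw [dv_du_symm hy ↑u]
    exact du_eq_deriv ((hdvy ↑u)) hvy ((hAd.neg).mul (Real.hasDerivAt_cos u))
  -- Laplacians vanish on the real axis, giving the vv-derivatives
  have hlapx : lap x ↑u = 0 := by
    rw [hpde1 ↑u, hux u, huz u, hvx u, hvz u]; ring
  have hlapy : lap y ↑u = 0 := by
    rw [hpde2 ↑u, huy u, huz u, hvy u, hvz u]; ring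
  have hdvvx : dv (dv x) ↑u = -(b * s + B u * c) := by
    have h := hlapx; rw [lap, hduux] at h; linarith
  have hdvvy : dv (dv y) ↑u = -(b * c + B u * (-s)) := by
    have h := hlapy; rw [lap, hduuy] at h; linarith
  -- the denominator is nonzero
  have hsc : s ^ 2 + c ^ 2 = 1 := Real.sin_sq_add_cos_sq u
  have hDval : du x ↑u ^ 2 + du y ↑u ^ 2 + du z ↑u ^ 2 = A u ^ 2 + B u ^ 2 := by
    rw [hux u, huy u, huz u]
    linear_combination (B u) ^ 2 * hsc
  have hD0 : du x ↑u ^ 2 + du y ↑u ^ 2 + du z ↑u ^ 2 ≠ 0 := by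
    rw [hDval]; exact (hAB u).ne'
  -- part 1
  have hN0 : du x ↑u * dv y ↑u - du y ↑u * dv x ↑u = 0 := by
    rw [hux u, huy u, hvx u, hvy u]; ring
  have h0 : angle x y z ↑u = 0 := by
    rw [angle, hN0, zero_div]
  refine ⟨h0, ?_⟩
  -- part 2: differentiate the quotient
  have hNdiff : DifferentiableAt ℝ (fun ξ => du x ξ * dv y ξ - du y ξ * dv x ξ) ↑u :=
    (((hdux ↑u)).mul ((hdvy ↑u))).sub (((hduy ↑u)).mul ((hdvx ↑u)))
  have hDdiff : DifferentiableAt ℝ (fun ξ => du x ξ ^ 2 + du y ξ ^ 2 + du z ξ ^ 2) ↑u :=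
    (((hdux ↑u).pow 2).add ((hduy ↑u).pow 2)).add ((hduz ↑u).pow 2)
  have hGdiff : DifferentiableAt ℝ (fun ξ => (du x ξ ^ 2 + du y ξ ^ 2 + du z ξ ^ 2)⁻¹) ↑u :=
    hDdiff.inv hD0
  have hfun : angle x y z = fun ξ => (du x ξ * dv y ξ - du y ξ * dv x ξ) *
      (du x ξ ^ 2 + du y ξ ^ 2 + du z ξ ^ 2)⁻¹ := by
    funext ξ; rw [angle, div_eq_mul_inv]
  have hNI : fderiv ℝ (fun ξ => du x ξ * dv y ξ - du y ξ * dv x ξ) ↑u Complex.I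
      = du x ↑u * dv (dv y) ↑u + dv y ↑u * dv (du x) ↑u
        - (du y ↑u * dv (dv x) ↑u + dv x ↑u * dv (du y) ↑u) := by
    rw [fderiv_fun_sub (f := fun ξ => du x ξ * dv y ξ) (g := fun ξ => du y ξ * dv x ξ) (((hdux ↑u)).mul ((hdvy ↑u))) (((hduy ↑u)).mul ((hdvx ↑u))),
      fderiv_fun_mul ((hdux ↑u)) ((hdvy ↑u)), fderiv_fun_mul ((hduy ↑u)) ((hdvx ↑u))]
    simp [dv]
  have hNIval : fderiv ℝ (fun ξ => du x ξ * dv y ξ - du y ξ * dv x ξ) ↑u Complex.I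
      = A u ^ 2 + B u ^ 2 := by
    rw [hNI, hdvvx, hdvvy, hdvux, hdvuy, hux u, huy u, hvx u, hvy u]
    linear_combination (A u ^ 2 + B u ^ 2) * hsc
  have hfd : fderiv ℝ (angle x y z) ↑u
      = (du x ↑u * dv y ↑u - du y ↑u * dv x ↑u) •
          fderiv ℝ (fun ξ => (du x ξ ^ 2 + du y ξ ^ 2 + du z ξ ^ 2)⁻¹) ↑u
        + (du x ↑u ^ 2 + du y ↑u ^ 2 + du z ↑u ^ 2)⁻¹ •
          fderiv ℝ (fun ξ => du x ξ * dv y ξ - du y ξ * dv x ξ) ↑u := by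
    rw [hfun]
    exact fderiv_mul hNdiff hGdiff
  show fderiv ℝ (angle x y z) ↑u Complex.I = 1
  rw [hfd]
  simp only [ContinuousLinearMap.add_apply, ContinuousLinearMap.smul_apply, smul_eq_mul]
  rw [hN0, hNIval, hDval, zero_mul, zero_add]
  exact inv_mul_cancel₀ (hAB u).ne'
end
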